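/- arXiv:1702.03179 — 2 statements merged into one kernel-verified Lean document; each statement's English description precedes it below -/
import Mathlib

section
/- Let n ≥ 7 and let l be the largest prime with l < n. If x is an l-cycle in the alternating group Alt(n), then the conjugacy class of x in Sym(n) has size n!/(l·(n−l)!), and the conjugacy class size of x in Alt(n) is divisible by 4 and by every prime divisor of |Alt(n)| other than l. -/
/-- `x` is a vanishing element of `G`: some irreducible complex character of `G`
(character of a simple finite-dimensional complex representation) vanishes at `x`. -/
def IsVanishing (G : Type) [Group G] (x : G) : Prop :=
  ∃ V : FDRep ℂ G, CategoryTheory.Simple V ∧ V.character x = 0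

/-- The size of the conjugacy class of `x`. -/
noncomputable def classSize {G : Type*} [Group G] (x : G) : ℕ :=
  Nat.card {y : G // IsConj x y}

/-- `x` has prime power order. -/
def HasPrimePowerOrder {G : Type*} [Group G] (x : G) : Prop :=
  ∃ p k : ℕ, p.Prime ∧ orderOf x = p ^ k

/-! The centralizer of an `l`-cycle `c` in `Sym(n)` has order `l · (n - l)!`, so the class of `c`
has size `n! / (l · (n - l)!) = C(n, l) · (l - 1)!`. For a subgroup `H` of index `k` and `x ∈ H`,
`C_H(x) ≤ C_G(x)` forces `|x^G| ∣ k · |x^H|`; with `H = Alt(n)` this gives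
`C(n, l) · (l - 1)! ∣ 2 · |x^{Alt(n)}|`. Since `l ≥ 5`, `8 ∣ (l - 1)!`, whence `4 ∣ |x^{Alt(n)}|`.
A prime `r ≠ l` dividing `n!` is either `< l`, hence divides `(l - 1)!`, or equals `n`, hence
divides `C(n, l)`. -/

open Subgroup Equiv Equiv.Perm Nat Finset

theorem classSize_mul_card_centralizer {G : Type*} [Group G] (x : G) :
    classSize x * Nat.card (centralizer {x}) = Nat.card G := by
  have horbit : classSize x = Nat.card (MulAction.orbit (ConjAct G) x) :=
    Nat.card_congr <| Equiv.subtypeEquivRight fun y => by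
      rw [ConjAct.mem_orbit_conjAct, isConj_comm]
  rw [horbit, nat_card_centralizer_nat_card_stabilizer, mul_comm, Nat.card_coe_set_eq,
    ← MulAction.index_stabilizer, card_mul_index]
  rfl

theorem card_centralizer_dvd_card_centralizer_coe {G : Type*} [Group G] {H : Subgroup G}
    (x : H) : Nat.card (centralizer {x}) ∣ Nat.card (centralizer {(x : G)}) := by
  rw [← card_map_of_injective H.subtype_injective]
  refine card_dvd_of_le ?_
  rintro _ ⟨y, hy, rfl⟩
  rw [SetLike.mem_coe, mem_centralizer_singleton_iff] at hy
  rw [mem_centralizer_singleton_iff]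
  exact congrArg Subtype.val hy

theorem classSize_dvd_index_mul_classSize {G : Type*} [Group G] [Finite G] {H : Subgroup G}
    (x : H) : classSize (x : G) ∣ H.index * classSize x := by
  obtain ⟨k, hk⟩ := card_centralizer_dvd_card_centralizer_coe x
  have hpos : 0 < Nat.card (centralizer {x}) := Nat.card_pos
  refine ⟨k, Nat.eq_of_mul_eq_mul_right hpos ?_⟩
  calc H.index * classSize x * Nat.card (centralizer {x})
      = Nat.card G := by rw [mul_assoc, classSize_mul_card_centralizer, index_mul_card]
    _ = classSize (x : G) * k * Nat.card (centralizer {x}) := by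
      rw [← classSize_mul_card_centralizer (x : G), hk]; ring

section Cycle

variable {α : Type*} [Fintype α] [DecidableEq α] {c : Perm α}

theorem Equiv.Perm.IsCycle.classSize_mul (hc : c.IsCycle) :
    classSize c * (#c.support * (Fintype.card α - #c.support)!) = (Fintype.card α)! := by
  have := classSize_mul_card_centralizer c
  rw [nat_card_centralizer, hc.cycleType, Nat.card_perm] at this
  simpa [mul_comm] using this

theorem Equiv.Perm.IsCycle.classSize_eq_choose_mul_factorial (hc : c.IsCycle) :
    classSize c = (Fintype.card α).choose #c.support * (#c.support - 1)! := by
  have hsupp : 0 < #c.support := by have := hc.two_le_card_support; omega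
  refine Nat.eq_of_mul_eq_mul_right
    (Nat.mul_pos hsupp (factorial_pos (Fintype.card α - #c.support))) ?_
  rw [hc.classSize_mul, ← choose_mul_factorial_mul_factorial (card_le_univ c.support),
    ← mul_factorial_pred hsupp.ne']
  ring

end Cycle

theorem Nat.Prime.dvd_choose_mul_factorial_of_forall_le {n l r : ℕ} (hl : 0 < l) (hln : l < n)
    (hmax : ∀ p : ℕ, p.Prime → p < n → p ≤ l) (hr : r.Prime) (hrn : r ∣ n !) (hrl : r ≠ l) :
    r ∣ n.choose l * (l - 1)! := by
  rcases ((hr.dvd_factorial).1 hrn).lt_or_eq with hlt | rfl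
  · exact dvd_mul_of_dvd_right (Nat.dvd_factorial hr.pos (by have := hmax r hr hlt; omega)) _
  · exact dvd_mul_of_dvd_left (hr.dvd_choose_self (by omega) hln) _

theorem stmt_8_general (n l : ℕ) (hn : 7 ≤ n) (hln : l < n)
    (hmax : ∀ r : ℕ, r.Prime → r < n → r ≤ l)
    (x : alternatingGroup (Fin n))
    (hcyc : (x : Equiv.Perm (Fin n)).IsCycle)
    (hsupp : (x : Equiv.Perm (Fin n)).support.card = l) :
    classSize (x : Equiv.Perm (Fin n)) = n.factorial / (l * (n - l).factorial) ∧
    4 ∣ classSize x ∧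
    ∀ r : ℕ, r.Prime → r ∣ Nat.card (alternatingGroup (Fin n)) → r ≠ l →
      r ∣ classSize x := by
  have hl5 : 5 ≤ l := hmax 5 prime_five (by omega)
  have : Nontrivial (Fin n) := Fin.nontrivial_iff_two_le.2 (by omega)
  have hsym : classSize (x : Perm (Fin n)) * (l * (n - l)!) = n ! := by
    simpa [hsupp] using hcyc.classSize_mul
  have hdvd : n.choose l * (l - 1)! ∣ 2 * classSize x := by
    simpa [alternatingGroup.index_eq_two, hcyc.classSize_eq_choose_mul_factorial, hsupp]
      using classSize_dvd_index_mul_classSize x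
  have h8 : 8 ∣ 2 * classSize x :=
    ((by decide : 8 ∣ 4 !).trans (factorial_dvd_factorial (by omega))).trans
      ((dvd_mul_left _ _).trans hdvd)
  have h4 : 4 ∣ classSize x := by omega
  refine ⟨(Nat.div_eq_of_eq_mul_left (by positivity) hsym.symm).symm, h4,
    fun r hr hrA hrl => ?_⟩
  have hrn : r ∣ n ! := hrA.trans <| (card_subgroup_dvd_card _).trans <| by
    rw [Nat.card_perm, Nat.card_fin]
  have hr2 := (hr.dvd_choose_mul_factorial_of_forall_le (by omega) hln hmax hrn hrl).trans hdvd
  by_cases h2 : r = 2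
  · subst h2
    omega
  · exact ((coprime_primes hr prime_two).2 h2).dvd_of_dvd_mul_left hr2

theorem stmt_8 (n l : ℕ) (hn : 7 ≤ n) (hl : l.Prime) (hln : l < n)
    (hmax : ∀ r : ℕ, r.Prime → r < n → r ≤ l)
    (x : alternatingGroup (Fin n))
    (hcyc : (x : Equiv.Perm (Fin n)).IsCycle)
    (hsupp : (x : Equiv.Perm (Fin n)).support.card = l) :
    classSize (x : Equiv.Perm (Fin n)) = n.factorial / (l * (n - l).factorial) ∧
    4 ∣ classSize x ∧
    ∀ r : ℕ, r.Prime → r ∣ Nat.card (alternatingGroup (Fin n)) → r ≠ l →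
      r ∣ classSize x :=
  stmt_8_general n l hn hln hmax x hcyc hsupp
end

section
/- For every n ≥ 7, there exists a prime l with l ≠ 2, l ≠ 3, and an element x of Alt(n) of order l such that 4 divides the size of the conjugacy class of x in Alt(n). -/
open Equiv Equiv.Perm Subgroup MulAction in
theorem stmt_9 (n : ℕ) (hn : 7 ≤ n) :
    ∃ l : ℕ, l.Prime ∧ l ≠ 2 ∧ l ≠ 3 ∧
      ∃ x : alternatingGroup (Fin n), orderOf x = l ∧ 4 ∣ classSize x := by
  refine ⟨5, by norm_num, by norm_num, by norm_num, ?_⟩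
  set L : List (Fin n) := [⟨0, by omega⟩, ⟨1, by omega⟩, ⟨2, by omega⟩, ⟨3, by omega⟩, ⟨4, by omega⟩] with hL
  have hnd : L.Nodup := by simp [hL, List.nodup_cons, Fin.ext_iff]
  set σ : Equiv.Perm (Fin n) := L.formPerm with hσ
  have hcyc : σ.IsCycle := List.isCycle_formPerm hnd (by simp [hL])
  have hsupp : σ.support = L.toFinset := List.support_formPerm_of_nodup L hnd (by intro y; simp [hL])
  have hcard : σ.support.card = 5 := by
    rw [hsupp, List.toFinset_card_of_nodup hnd, hL]; rfl
  have hord : orderOf σ = 5 := by rw [hcyc.orderOf, hcard]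
  have hsign : Equiv.Perm.sign σ = 1 := by rw [hcyc.sign, hcard]; decide
  have hmem : σ ∈ alternatingGroup (Fin n) := Equiv.Perm.mem_alternatingGroup.mpr hsign
  set G := alternatingGroup (Fin n) with hG
  set x : G := ⟨σ, hmem⟩ with hx
  refine ⟨x, ?_, ?_⟩
  · rw [← hord]
    exact (orderOf_injective G.subtype G.subtype_injective x).symm
  · -- class size
    have horb : classSize x = Nat.card (orbit (ConjAct ↥G) x) :=
      Nat.card_congr (Equiv.subtypeEquivRight fun y =>
        isConj_comm.trans ConjAct.mem_orbit_conjAct.symm)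
    have hos : Nat.card (orbit (ConjAct ↥G) x) * Nat.card (stabilizer (ConjAct ↥G) x)
        = Nat.card ↥G := by
      rw [← Nat.card_prod]
      exact Nat.card_congr (orbitProdStabilizerEquivGroup (ConjAct ↥G) x)
    -- stabilizer ↪ centralizer of σ in Perm (Fin n)
    have hstab_dvd : Nat.card (stabilizer (ConjAct ↥G) x) ∣
        Nat.card ↥(Subgroup.centralizer ({σ} : Set (Perm (Fin n)))) := by
      let f0 : stabilizer (ConjAct ↥G) x →* Perm (Fin n) :=
        G.subtype.comp (ConjAct.ofConjAct.toMonoidHom.comp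
          (stabilizer (ConjAct ↥G) x).subtype)
      have hf0 : ∀ u : stabilizer (ConjAct ↥G) x,
          f0 u ∈ Subgroup.centralizer ({σ} : Set (Perm (Fin n))) := by
        intro u
        rw [Subgroup.mem_centralizer_singleton_iff]
        have hu := u.2
        rw [mem_stabilizer_iff, ConjAct.smul_def, mul_inv_eq_iff_eq_mul] at hu
        have := congrArg G.subtype hu
        simpa [f0, hx] using this
      have hf0inj : Function.Injective f0 := fun a b h =>
        (stabilizer (ConjAct ↥G) x).subtype_injective
          (ConjAct.ofConjAct.injective (G.subtype_injective h))
      exact Subgroup.card_dvd_of_injective (f0.codRestrict _ hf0)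
        ((MonoidHom.injective_codRestrict f0 _ hf0).mpr hf0inj)
    -- centralizer of σ divides 5 * (n-5)!
    have hcent_dvd : Nat.card ↥(Subgroup.centralizer ({σ} : Set (Perm (Fin n)))) ∣
        5 * (n - 5).factorial := by
      have hc : ∀ u : ↥(Subgroup.centralizer ({σ} : Set (Perm (Fin n)))),
          Commute (u : Perm (Fin n)) σ :=
        fun u => Subgroup.mem_centralizer_singleton_iff.mp u.2
      let F : ↥(Subgroup.centralizer ({σ} : Set (Perm (Fin n)))) →*
          ↥(Subgroup.zpowers σ) × Perm {a : Fin n // a ∉ σ.support} :=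
        MonoidHom.mk'
          (fun u => (⟨ofSubtype ((u : Perm (Fin n)).subtypePerm
              (hcyc.commute_iff.mp (hc u)).choose),
              (hcyc.commute_iff.mp (hc u)).choose_spec⟩,
            (u : Perm (Fin n)).subtypePerm
              (fun a => not_iff_not.mpr (mem_support_iff_of_commute (hc u) a))))
          (by
            intro u v
            refine Prod.ext (Subtype.ext ?_) ?_
            · show Perm.ofSubtype (((u * v : ↥(Subgroup.centralizer ({σ} : Set (Perm (Fin n))))) :
                    Perm (Fin n)).subtypePerm (hcyc.commute_iff.mp (hc (u * v))).choose)
                = Perm.ofSubtype ((u : Perm (Fin n)).subtypePerm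
                    (hcyc.commute_iff.mp (hc u)).choose)
                  * Perm.ofSubtype ((v : Perm (Fin n)).subtypePerm
                    (hcyc.commute_iff.mp (hc v)).choose)
              rw [← map_mul, subtypePerm_mul]
              rfl
            · show ((u * v : ↥(Subgroup.centralizer ({σ} : Set (Perm (Fin n))))) :
                    Perm (Fin n)).subtypePerm
                    (fun b => not_iff_not.mpr (mem_support_iff_of_commute (hc (u * v)) b))
                = (u : Perm (Fin n)).subtypePerm
                    (fun b => not_iff_not.mpr (mem_support_iff_of_commute (hc u) b))
                  * (v : Perm (Fin n)).subtypePerm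
                    (fun b => not_iff_not.mpr (mem_support_iff_of_commute (hc v) b))
              rw [subtypePerm_mul]
              rfl)
      have hFinj : Function.Injective F := by
        intro u v huv
        have h1 : Perm.ofSubtype ((u : Perm (Fin n)).subtypePerm
              (hcyc.commute_iff.mp (hc u)).choose)
            = Perm.ofSubtype ((v : Perm (Fin n)).subtypePerm
              (hcyc.commute_iff.mp (hc v)).choose) :=
          congrArg (fun p : ↥(Subgroup.zpowers σ) × Perm {b : Fin n // b ∉ σ.support} =>
            (p.1 : Perm (Fin n))) huv
        have h2 : (u : Perm (Fin n)).subtypePerm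
              (fun b => not_iff_not.mpr (mem_support_iff_of_commute (hc u) b))
            = (v : Perm (Fin n)).subtypePerm
              (fun b => not_iff_not.mpr (mem_support_iff_of_commute (hc v) b)) :=
          congrArg Prod.snd huv
        refine Subtype.ext (Equiv.ext fun a => ?_)
        by_cases ha : a ∈ σ.support
        · have := DFunLike.congr_fun h1 a
          rwa [ofSubtype_subtypePerm_of_mem _ ha, ofSubtype_subtypePerm_of_mem _ ha] at this
        · have := congrArg Subtype.val (DFunLike.congr_fun h2 ⟨a, ha⟩)
          simpa [subtypePerm_apply] using this
      calc Nat.card ↥(Subgroup.centralizer ({σ} : Set (Perm (Fin n))))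
          ∣ Nat.card (↥(Subgroup.zpowers σ) × Perm {a : Fin n // a ∉ σ.support}) :=
            Subgroup.card_dvd_of_injective F hFinj
        _ = 5 * (n - 5).factorial := by
            rw [Nat.card_prod, Nat.card_zpowers, hord, Nat.card_eq_fintype_card,
              Fintype.card_perm, Fintype.card_subtype_compl, Fintype.card_fin,
              Fintype.card_coe, hcard]
    -- cardinality of the alternating group
    have hnt : Nontrivial (Fin n) := Fin.nontrivial_iff_two_le.mpr (by omega)
    have hcardG : 2 * Nat.card ↥G = n.factorial := by
      have h := two_mul_card_alternatingGroup (α := Fin n)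
      rw [Fintype.card_perm, Fintype.card_fin] at h
      rw [Nat.card_eq_fintype_card]
      exact h
    -- arithmetic
    obtain ⟨m, hm⟩ := hstab_dvd.trans hcent_dvd
    set k := classSize x
    set s := Nat.card (stabilizer (ConjAct ↥G) x)
    have h1 : 2 * (k * s) = n.factorial := by rw [horb, hos, hcardG]
    have h3 : n.choose 5 * 120 * (n - 5).factorial = n.factorial := by
      have := Nat.choose_mul_factorial_mul_factorial (show 5 ≤ n by omega)
      simpa [Nat.factorial] using this
    set N := (n - 5).factorial with hN
    have hNpos : 0 < N := Nat.factorial_pos _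
    have key : k * (10 * N) = (12 * (n.choose 5 * m)) * (10 * N) := by
      calc k * (10 * N) = 2 * (k * (5 * N)) := by ring
        _ = 2 * (k * (s * m)) := by rw [hm]
        _ = 2 * (k * s) * m := by ring
        _ = n.factorial * m := by rw [h1]
        _ = n.choose 5 * 120 * N * m := by rw [h3]
        _ = (12 * (n.choose 5 * m)) * (10 * N) := by ring
    have hk : k = 12 * (n.choose 5 * m) :=
      Nat.eq_of_mul_eq_mul_right (by positivity) key
    exact ⟨3 * (n.choose 5 * m), by rw [hk]; ring⟩
end
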